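/- arXiv:1702.08128 — 2 statements merged into one kernel-verified Lean document; each statement's English description precedes it below -/
import Mathlib

section
/- Let ℓ = 4 and define ℓ_t(n) = Σ_{i≥0} (−1)^i w_{g^i(t)}(n), where w_s(n) = C(n, (n−s)/2) − C(n, (n−s)/2 − 1) if 0 ≤ s ≤ n and s ≡ n mod 2, and w_s(n) = 0 otherwise, and g(t) = t+6 if t ≡ 0 mod 4, g(t) = t+2 if t ≡ 2 mod 4, g(t) = t+4 if t ≡ 1 mod 4. Then for every odd n ≥ 3, ℓ_1(n) = 2^{(n−1)/2}. -/
/-- `w_s(n) = C(n,(n-s)/2) - C(n,(n-s)/2 - 1)` if `0 ≤ s ≤ n` and `s ≡ n (mod 2)`,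
and `0` otherwise (with the convention `C(n,-1) = 0`). -/
def wdim (s n : ℕ) : ℤ :=
  if s ≤ n ∧ (n - s) % 2 = 0 then
    (n.choose ((n - s) / 2) : ℤ) -
      (if (n - s) / 2 = 0 then 0 else (n.choose ((n - s) / 2 - 1) : ℤ))
  else 0

/-- The `g` function for `ℓ = 4`:  `g(t) = t+6` if `t ≡ 0 (mod 4)`, `t+2` if
`t ≡ 2 (mod 4)`, `t+4` if `t ≡ 1 (mod 4)`. -/
def g4 (t : ℕ) : ℕ :=
  if t % 4 = 0 then t + 6 else if t % 4 = 2 then t + 2 else t + 4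

/-- `ℓ_t(n) = Σ_{i≥0} (-1)^i w_{gⁱ(t)}(n)`; the sum is finite since `w_s(n) = 0`
for `s > n`, so it may be truncated at `i = n`. -/
def elldim (g : ℕ → ℕ) (t n : ℕ) : ℤ :=
  ∑ i ∈ Finset.range (n + 1), (-1 : ℤ) ^ i * wdim (g^[i] t) n

/-!
For `n = 2m + 1` the iterates `gⁱ(1) = 4i + 1` pick out every other odd weight, and writing
`w_s(n)` as a difference of binomial coefficients turns `ℓ₁(n)` into `∑ⱼ εⱼ C(n, m + 1 + j)`,
where `εⱼ = (-1)^⌊(j + 1)/2⌋` runs through `1, -1, -1, 1` with period 4. Since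
`C(n, k) = C(n, n - k)` and `ε` is compatible with this reflection, the half sum is half of the
full sum `∑ₖ εₖ₊ₐ C(n, k)` with `a = 3m + 3`. Writing `2εⱼ = (1 + i) iʲ + (1 - i) (-i)ʲ` and
applying the binomial theorem, the full sum equals `Re ((1 + i) iᵃ (1 + i)ⁿ) = 2^(m+1)`.
-/

open Finset

lemma g4_iterate_one (i : ℕ) : g4^[i] 1 = 4 * i + 1 := by
  induction i with
  | zero => rfl
  | succ i ih =>
    rw [Function.iterate_succ_apply', ih, g4, if_neg (by omega), if_neg (by omega)]
    ring

lemma wdim_two_mul_add (r j m : ℕ) :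
    wdim (2 * j + r) (2 * m + r) =
      ((2 * m + r).choose (m + j + r) : ℤ) - (2 * m + r).choose (m + j + r + 1) := by
  unfold wdim
  by_cases hjm : j ≤ m
  · have hhalf : (2 * m + r - (2 * j + r)) / 2 = m - j := by omega
    rw [if_pos ⟨by omega, by omega⟩, hhalf,
      Nat.choose_symm_of_eq_add (by omega : 2 * m + r = m - j + (m + j + r))]
    split_ifs with hj
    · rw [Nat.choose_eq_zero_of_lt (by omega : 2 * m + r < m + j + r + 1), Nat.cast_zero]
    · rw [Nat.choose_symm_of_eq_add (by omega : 2 * m + r = m - j - 1 + (m + j + r + 1))]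
  · rw [if_neg (by omega), Nat.choose_eq_zero_of_lt (by omega),
      Nat.choose_eq_zero_of_lt (by omega)]
    simp

lemma sum_range_two_mul_neg_one_pow_half {R : Type*} [CommRing R] (f : ℕ → R) (M : ℕ) :
    ∑ j ∈ range (2 * M), (-1 : R) ^ ((j + 1) / 2) * f j =
      ∑ i ∈ range M, (-1) ^ i * (f (2 * i) - f (2 * i + 1)) := by
  induction M with
  | zero => simp
  | succ M ih =>
    rw [Nat.mul_succ, sum_range_succ, sum_range_succ, sum_range_succ, ih,
      show (2 * M + 1 + 1) / 2 = M + 1 by omega, show (2 * M + 1) / 2 = M by omega, pow_succ]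
    ring

lemma sum_range_eq_two_nsmul_of_symm {M : Type*} [AddCommMonoid M] (f : ℕ → M) (m : ℕ)
    (hf : ∀ j ≤ m, f (m - j) = f (m + 1 + j)) :
    ∑ k ∈ range (2 * m + 2), f k = 2 • ∑ j ∈ range (m + 1), f (m + 1 + j) := by
  rw [show 2 * m + 2 = (m + 1) + (m + 1) by ring, sum_range_add, two_nsmul,
    ← sum_range_reflect]
  congr 1
  refine sum_congr rfl fun j hj => ?_
  rw [Nat.add_sub_cancel, hf j (Nat.lt_succ_iff.mp (mem_range.mp hj))]

section SquareRootOfNegOne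

variable {R : Type*} [CommRing R] {z : R}

lemma pow_four_eq_one_of_sq_eq_neg_one (hz : z ^ 2 = -1) : z ^ 4 = 1 := by
  rw [show 4 = 2 * 2 from rfl, pow_mul, hz, neg_one_sq]

lemma two_mul_neg_one_pow_half (hz : z ^ 2 = -1) (j : ℕ) :
    2 * (-1 : R) ^ ((j + 1) / 2) = (1 + z) * z ^ j + (1 - z) * (-z) ^ j := by
  obtain ⟨q, r, hr, rfl⟩ : ∃ q r, r < 4 ∧ j = 4 * q + r :=
    ⟨j / 4, j % 4, Nat.mod_lt _ (by norm_num), (Nat.div_add_mod j 4).symm⟩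
  rw [neg_one_pow_congr (n := (r + 1) / 2) (by simp only [Nat.even_iff]; omega), pow_add,
    pow_add, pow_mul, pow_mul, pow_four_eq_one_of_sq_eq_neg_one hz,
    pow_four_eq_one_of_sq_eq_neg_one (by rw [neg_sq, hz])]
  simp only [one_pow, one_mul]
  interval_cases r
  · ring
  · linear_combination (-2) * hz
  · linear_combination (-2) * hz
  · linear_combination (-2 * (z ^ 2 - 1)) * hz

lemma two_mul_sum_neg_one_pow_half_mul_choose (hz : z ^ 2 = -1) (a n : ℕ) :
    2 * ∑ k ∈ range (n + 1), (-1 : R) ^ ((k + a + 1) / 2) * (n.choose k : R) =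
      (1 + z) * z ^ a * (1 + z) ^ n + (1 - z) * (-z) ^ a * (1 - z) ^ n := by
  rw [add_comm 1 z, add_pow, sub_eq_add_neg, add_comm 1 (-z), add_pow, mul_sum, mul_sum,
    mul_sum, ← sum_add_distrib]
  refine sum_congr rfl fun k _ => ?_
  rw [← mul_assoc, two_mul_neg_one_pow_half hz, one_pow, mul_one, mul_one, sub_eq_add_neg]
  ring

lemma one_add_mul_pow_eq_two_pow (hz : z ^ 2 = -1) (m : ℕ) :
    (1 + z) * z ^ (3 * m + 3) * (1 + z) ^ (2 * m + 1) = 2 ^ (m + 1) :=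
  calc (1 + z) * z ^ (3 * m + 3) * (1 + z) ^ (2 * m + 1)
      = ((1 + z) ^ 2) ^ (m + 1) * z ^ (3 * m + 3) := by rw [← pow_mul]; ring
    _ = (2 * z) ^ (m + 1) * z ^ (3 * m + 3) := by
        rw [show (1 + z) ^ 2 = 2 * z by linear_combination hz]
    _ = 2 ^ (m + 1) * (z ^ 4) ^ (m + 1) := by ring
    _ = 2 ^ (m + 1) := by rw [pow_four_eq_one_of_sq_eq_neg_one hz, one_pow, mul_one]

end SquareRootOfNegOne

lemma sum_neg_one_pow_half_mul_choose (m : ℕ) :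
    ∑ k ∈ range (2 * m + 1 + 1),
        (-1 : ℤ) ^ ((k + (3 * m + 3) + 1) / 2) * ((2 * m + 1).choose k : ℤ) = 2 ^ (m + 1) := by
  have h := two_mul_sum_neg_one_pow_half_mul_choose Complex.I_sq (3 * m + 3) (2 * m + 1)
  rw [one_add_mul_pow_eq_two_pow Complex.I_sq, sub_eq_add_neg,
    one_add_mul_pow_eq_two_pow (by rw [neg_sq, Complex.I_sq])] at h
  have h' : (2 : ℂ) * ∑ k ∈ range (2 * m + 1 + 1),
      (-1 : ℤ) ^ ((k + (3 * m + 3) + 1) / 2) * ((2 * m + 1).choose k : ℤ) = 2 * 2 ^ (m + 1) := by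
    push_cast
    rw [h]
    ring
  exact_mod_cast mul_left_cancel₀ two_ne_zero h'

lemma elldim_g4_one_two_mul_add_one (m : ℕ) : elldim g4 1 (2 * m + 1) = 2 ^ m := by
  set D : ℕ → ℤ := fun j => ((2 * m + 1).choose (m + j + 1) : ℤ)
  -- `3m + 3 ≡ -(m + 1) (mod 4)`, so `f (m + 1 + j)` carries the sign of `D j`.
  set f : ℕ → ℤ := fun k => (-1) ^ ((k + (3 * m + 3) + 1) / 2) * ((2 * m + 1).choose k : ℤ)
  have hDf (j : ℕ) : (-1) ^ ((j + 1) / 2) * D j = f (m + 1 + j) := by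
    simp only [D, f]
    congr 1
    · exact neg_one_pow_congr (by simp only [Nat.even_iff]; omega)
    · rw [add_right_comm]
  have hf_symm (j : ℕ) (hj : j ≤ m) : f (m - j) = f (m + 1 + j) := by
    simp only [f]
    congr 1
    · rw [show m - j + (3 * m + 3) + 1 = 4 * (m + 1) - j by omega]
      exact neg_one_pow_congr (by simp only [Nat.even_iff]; omega)
    · rw [Nat.choose_symm_of_eq_add (by omega : 2 * m + 1 = m - j + (m + 1 + j))]
  calc elldim g4 1 (2 * m + 1)
      = ∑ i ∈ range (2 * m + 2), (-1) ^ i * (D (2 * i) - D (2 * i + 1)) := by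
        refine sum_congr rfl fun i _ => ?_
        rw [g4_iterate_one, show 4 * i + 1 = 2 * (2 * i) + 1 by ring, wdim_two_mul_add]
        rfl
    _ = ∑ j ∈ range (2 * (2 * m + 2)), (-1) ^ ((j + 1) / 2) * D j :=
        (sum_range_two_mul_neg_one_pow_half D _).symm
    _ = ∑ j ∈ range (m + 1), (-1) ^ ((j + 1) / 2) * D j := by
        refine (sum_subset (range_subset_range.2 (by omega)) fun j _ hj => ?_).symm
        rw [mem_range, not_lt] at hj
        simp only [D]
        rw [Nat.choose_eq_zero_of_lt (by omega), Nat.cast_zero, mul_zero]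
    _ = ∑ j ∈ range (m + 1), f (m + 1 + j) := sum_congr rfl fun j _ => hDf j
    _ = 2 ^ m := by
        have h := sum_range_eq_two_nsmul_of_symm f m hf_symm
        have hfull : ∑ k ∈ range (2 * m + 2), f k = 2 ^ (m + 1) :=
          sum_neg_one_pow_half_mul_choose m
        rw [hfull, two_nsmul, pow_succ] at h
        linarith

theorem ell_one_ising_general (n : ℕ) (hn : Odd n) :
    elldim g4 1 n = 2 ^ ((n - 1) / 2) := by
  obtain ⟨m, rfl⟩ := hn
  rw [elldim_g4_one_two_mul_add_one, Nat.add_sub_cancel, Nat.mul_div_cancel_left _ two_pos]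

/-- For `ℓ = 4` and every odd `n ≥ 3`, `ℓ_1(n) = 2^{(n-1)/2}`. -/
theorem ell_one_ising (n : ℕ) (hn : Odd n) (h3 : 3 ≤ n) :
    elldim g4 1 n = 2 ^ ((n - 1) / 2) :=
  ell_one_ising_general n hn
end

section
/- In the even part of the complex Clifford algebra on generators γ_1,…,γ_n with relations γ_iγ_j + γ_jγ_i = δ_{ij}, the elements F_j = (1/√2)(1 + 2i γ_j γ_{j+1}) for j = 1,…,n−1 satisfy the Temperley-Lieb relations: F_j² = √2·F_j, F_j F_{j±1} F_j = F_j, and F_j F_k = F_k F_j when |j−k| ≥ 2. -/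
/-!
Put `u_j = 2i γ_j γ_{j+1}`, so that `F_j = (1 + u_j)/√2`. The Clifford relations make each
`u_j` an involution, make `u_j` and `u_{j+1}` anticommute, and make `u_j`, `u_k` commute for
`|j - k| ≥ 2`. For an involution `u`, `(1 + u)² = 2(1 + u)`, and if `v` anticommutes with `u`
then `(1 + u)(1 + v)(1 + u) = 2(1 + u)`, since `uv + vu = 0` and `uvu = -v`. Dividing by the
appropriate powers of `√2` gives the Temperley-Lieb relations.
-/

open Complex

section Ring

variable {R : Type*} [Ring R]

theorem one_add_mul_self_of_mul_self_eq_one {u : R} (hu : u * u = 1) :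
    (1 + u) * (1 + u) = 2 * (1 + u) := by
  calc (1 + u) * (1 + u) = 1 + 2 * u + u * u := by noncomm_ring
    _ = 2 * (1 + u) := by rw [hu]; noncomm_ring

theorem one_add_mul_one_add_mul_one_add_of_anticomm {u v : R} (hu : u * u = 1)
    (huv : u * v = -(v * u)) :
    (1 + u) * (1 + v) * (1 + u) = 2 * (1 + u) := by
  have huvu : u * v * u = -v := by rw [huv, neg_mul, mul_assoc, hu, mul_one]
  calc (1 + u) * (1 + v) * (1 + u) = 1 + u * u + 2 * u + v + (u * v + v * u) + u * v * u := by
        noncomm_ring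
    _ = 2 * (1 + u) := by rw [huvu, hu, huv]; noncomm_ring

theorem mul_mul_mul_self_of_anticomm {x y : R} (hyx : y * x = -(x * y)) :
    x * y * (x * y) = -(x * x * (y * y)) := by
  rw [mul_assoc, ← mul_assoc y, hyx]
  noncomm_ring

theorem mul_mul_mul_of_anticomm {x y z : R} (hyx : y * x = -(x * y)) (hzx : z * x = -(x * z))
    (hzy : z * y = -(y * z)) :
    x * y * (y * z) = -(y * z * (x * y)) := by
  have hzxy : z * (x * y) = x * y * z := by
    rw [← mul_assoc, hzx, neg_mul, mul_assoc, hzy, mul_neg, neg_neg, mul_assoc]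
  calc x * y * (y * z) = -(y * x * (y * z)) := by rw [hyx, neg_mul, neg_neg]
    _ = -(y * z * (x * y)) := by rw [mul_assoc y z, hzxy]; noncomm_ring

theorem commute_mul_mul_of_anticomm {w x y z : R} (hyw : y * w = -(w * y))
    (hyx : y * x = -(x * y)) (hzw : z * w = -(w * z)) (hzx : z * x = -(x * z)) :
    Commute (w * x) (y * z) := by
  have hy : Commute y (w * x) := by
    rw [Commute, SemiconjBy, ← mul_assoc, hyw, neg_mul, mul_assoc, hyx, mul_neg, neg_neg,
      mul_assoc]
  have hz : Commute z (w * x) := by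
    rw [Commute, SemiconjBy, ← mul_assoc, hzw, neg_mul, mul_assoc, hzx, mul_neg, neg_neg,
      mul_assoc]
  exact (hy.mul_left hz).symm

end Ring

section ComplexAlgebra

variable {A : Type*} [Ring A] [Algebra ℂ A]

theorem two_I_smul_mul_self_eq_one {x y : A} (hx : x * x + x * x = 1) (hy : y * y + y * y = 1)
    (hyx : y * x = -(x * y)) :
    (2 * I) • (x * y) * ((2 * I) • (x * y)) = 1 := by
  have hI : (2 * I) * (2 * I) = -4 := by
    rw [mul_mul_mul_comm, I_mul_I]
    norm_num
  -- `(2i xy)² = -4 • -(x² y²) = (2x²)(2y²)`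
  rw [smul_mul_smul_comm, hI, mul_mul_mul_self_of_anticomm hyx, smul_neg, ← neg_smul, neg_neg,
    show (4 : ℂ) = 2 * 2 by norm_num, ← smul_smul, ← smul_mul_assoc, ← mul_smul_comm,
    two_smul, two_smul, hx, hy, one_mul]

noncomputable def tlGen (u : A) : A := ((Real.sqrt 2 : ℂ))⁻¹ • (1 + u)

theorem sqrt_two_mul_self : ((Real.sqrt 2 : ℂ)) * (Real.sqrt 2 : ℂ) = 2 := by
  norm_cast
  exact Real.mul_self_sqrt zero_le_two

theorem tlGen_mul_self {u : A} (hu : u * u = 1) :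
    tlGen u * tlGen u = (Real.sqrt 2 : ℂ) • tlGen u := by
  have hs : ((Real.sqrt 2 : ℂ)) ≠ 0 := by exact_mod_cast (Real.sqrt_pos.2 two_pos).ne'
  rw [tlGen, smul_mul_smul_comm, one_add_mul_self_of_mul_self_eq_one hu, smul_smul,
    two_mul, ← two_smul ℂ, smul_smul]
  congr 1
  field_simp
  rw [sq, sqrt_two_mul_self]

theorem tlGen_mul_tlGen_mul_tlGen {u v : A} (hu : u * u = 1) (huv : u * v = -(v * u)) :
    tlGen u * tlGen v * tlGen u = tlGen u := by
  have hs : ((Real.sqrt 2 : ℂ)) ≠ 0 := by exact_mod_cast (Real.sqrt_pos.2 two_pos).ne'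
  rw [tlGen, tlGen, smul_mul_smul_comm, smul_mul_smul_comm,
    one_add_mul_one_add_mul_one_add_of_anticomm hu huv,
    two_mul, ← two_smul ℂ, smul_smul]
  congr 1
  field_simp
  rw [sq, sqrt_two_mul_self]

theorem Commute.tlGen {u v : A} (h : Commute u v) : Commute (tlGen u) (tlGen v) :=
  (((Commute.one_left _).add_left ((Commute.one_right u).add_right h)).smul_left _).smul_right _

end ComplexAlgebra

/-- In (the even part of) the complex Clifford algebra on generators `γ_1, …, γ_n`
with relations `γ_i γ_j + γ_j γ_i = δ_{ij}`, the elements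
`F_j = (1/√2)(1 + 2i γ_j γ_{j+1})` satisfy the Temperley-Lieb relations
`F_j² = √2·F_j`, `F_j F_{j±1} F_j = F_j`, and `F_j F_k = F_k F_j` for `|j-k| ≥ 2`. -/
theorem clifford_temperley_lieb (n : ℕ) (A : Type*) [Ring A] [Algebra ℂ A]
    (γ : ℕ → A)
    (hγ : ∀ i j, i < n → j < n →
      γ i * γ j + γ j * γ i = if i = j then (1 : A) else 0)
    (F : ℕ → A)
    (hF : ∀ j, F j = ((Real.sqrt 2 : ℂ))⁻¹ • (1 + (2 * Complex.I) • (γ j * γ (j + 1)))) :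
    (∀ j, j + 1 < n → F j * F j = (Real.sqrt 2 : ℂ) • F j) ∧
    (∀ j, j + 2 < n → F j * F (j + 1) * F j = F j) ∧
    (∀ j, j + 2 < n → F (j + 1) * F j * F (j + 1) = F (j + 1)) ∧
    (∀ j k, j + 1 < n → k + 1 < n → j + 2 ≤ k → F j * F k = F k * F j) := by
  have hsq : ∀ i < n, γ i * γ i + γ i * γ i = 1 := fun i hi => by simpa using hγ i i hi hi
  have hanti : ∀ i j, i < n → j < n → i ≠ j → γ i * γ j = -(γ j * γ i) := fun i j hi hj hij =>
    eq_neg_of_add_eq_zero_left (by simpa [hij] using hγ i j hi hj)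
  set u : ℕ → A := fun j => (2 * I) • (γ j * γ (j + 1))
  have hFu : ∀ j, F j = tlGen (u j) := hF
  have hu : ∀ j, j + 1 < n → u j * u j = 1 := fun j hj =>
    two_I_smul_mul_self_eq_one (hsq j (by omega)) (hsq (j + 1) hj)
      (hanti _ _ hj (by omega) (by omega))
  have hanti_u : ∀ j, j + 2 < n → u j * u (j + 1) = -(u (j + 1) * u j) := fun j hj => by
    simp only [u, smul_mul_smul_comm, ← smul_neg]
    rw [mul_mul_mul_of_anticomm (hanti _ _ (by omega) (by omega) (by omega))
      (hanti _ _ hj (by omega) (by omega)) (hanti _ _ hj (by omega) (by omega))]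
  have hcomm_u : ∀ j k, k + 1 < n → j + 2 ≤ k → Commute (u j) (u k) := fun j k hk hjk =>
    ((commute_mul_mul_of_anticomm (hanti _ _ (by omega) (by omega) (by omega))
      (hanti _ _ (by omega) (by omega) (by omega)) (hanti _ _ hk (by omega) (by omega))
      (hanti _ _ hk (by omega) (by omega))).smul_left _).smul_right _
  simp only [hFu]
  refine ⟨fun j hj => tlGen_mul_self (hu j hj),
    fun j hj => tlGen_mul_tlGen_mul_tlGen (hu j (by omega)) (hanti_u j hj),
    fun j hj => tlGen_mul_tlGen_mul_tlGen (hu (j + 1) hj) ?_,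
    fun j k _ hk hjk => (hcomm_u j k hk hjk).tlGen.eq⟩
  rw [hanti_u j hj, neg_neg]
end
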